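/- For a, b ∈ (0,1], the map f = f_{a,b} has no 2-periodic point x with both x ≤ 1/2 and f(x) ≤ 1/2; i.e., if x ∈ [0,1/2], f(x) ∈ [0,1/2] and f(f(x)) = x, then f(x) = x. -/

import Mathlib

noncomputable def fab (a b x : ℝ) : ℝ :=
  if x ≤ 1/2 then x * (1 + a - a * x) else x * (1 - b + b * x)

-- On the left branch `fab a b y - y = a * y * (1 - y)`.
theorem le_fab_of_mem_Icc {a y : ℝ} (b : ℝ) (ha : 0 ≤ a) (hy : y ∈ Set.Icc (0:ℝ) (1/2)) :
    y ≤ fab a b y := by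
  rw [fab, if_pos hy.2]
  nlinarith [mul_nonneg (mul_nonneg ha hy.1) (by linarith [hy.2] : (0:ℝ) ≤ 1 - y)]

theorem stmt15_general (a b : ℝ) (ha : a ∈ Set.Ioc (0:ℝ) 1)
    (x : ℝ) (hx : x ∈ Set.Icc (0:ℝ) (1/2)) (hfx : fab a b x ∈ Set.Icc (0:ℝ) (1/2))
    (hper : fab a b (fab a b x) = x) :
    fab a b x = x :=
  le_antisymm ((le_fab_of_mem_Icc b ha.1.le hfx).trans_eq hper) (le_fab_of_mem_Icc b ha.1.le hx)

theorem stmt15 (a b : ℝ) (ha : a ∈ Set.Ioc (0:ℝ) 1) (hb : b ∈ Set.Ioc (0:ℝ) 1)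
    (x : ℝ) (hx : x ∈ Set.Icc (0:ℝ) (1/2)) (hfx : fab a b x ∈ Set.Icc (0:ℝ) (1/2))
    (hper : fab a b (fab a b x) = x) :
    fab a b x = x :=
  stmt15_general a b ha x hx hfx hper
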